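/- Let Δ = {(x,y,z) : x,y,z ≥ 0, x+y+z = 1} and suppose λ₁: int(Δ) → (0,1) is a real-analytic convex function with λ₁ < 1 everywhere on int(Δ), such that convexity would force λ₁ = 1 at the boundary endpoints of any line on which it is constant. Then λ₁ is strictly convex on int(Δ): there do not exist three distinct collinear points X₁, X₂, X₃ ∈ int(Δ) with λ₁(X₁) = λ₁(X₂) = λ₁(X₃). -/

import Mathlib

/-!
Restrict `f` to the line through the three points. There it is a convex function of one real
variable, so taking one value at three points forces it to be constant on the segment between
the outer two; since it is also analytic on the (connected) chord of the simplex, the identity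
theorem makes it constant on the whole chord. The boundary hypothesis then gives the value `1`,
contradicting `f < 1`.
-/

open Set AffineMap

theorem ConvexOn.eqOn_Icc_of_eq {T : Set ℝ} {g : ℝ → ℝ} (hg : ConvexOn ℝ T g)
    {p m q : ℝ} (hp : p ∈ T) (hq : q ∈ T) (hpm : p < m) (hmq : m < q)
    (hgp : g p = g m) (hgq : g q = g m) : EqOn g (fun _ => g m) (Icc p q) := by
  intro x hx
  have hxT : x ∈ T := hg.1.segment_subset hp hq (segment_eq_Icc (hpm.trans hmq).le ▸ hx)
  refine le_antisymm ?_ ?_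
  · simpa [hgp, hgq] using hg.le_on_segment hp hq (segment_eq_Icc (hpm.trans hmq).le ▸ hx)
  · rcases lt_trichotomy x m with hxm | rfl | hmx
    · refine hg.le_left_of_right_le hxT hq ?_ hgq.le
      rw [openSegment_eq_Ioo (hxm.trans hmq)]
      exact ⟨hxm, hmq⟩
    · exact le_rfl
    · refine hg.le_right_of_left_le hp hxT ?_ hgp.le
      rw [openSegment_eq_Ioo (hpm.trans hmx)]
      exact ⟨hpm, hmx⟩

theorem exists_lt_lt_of_three_ne {P : ℝ → Prop} {a b c : ℝ} (ha : P a) (hb : P b) (hc : P c)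
    (hab : a ≠ b) (hac : a ≠ c) (hbc : b ≠ c) : ∃ p m q, p < m ∧ m < q ∧ P p ∧ P m ∧ P q := by
  rcases hab.lt_or_gt with hab | hab <;> rcases hac.lt_or_gt with hac | hac <;>
    rcases hbc.lt_or_gt with hbc | hbc
  all_goals first
    | exact ⟨a, b, c, hab, hbc, ha, hb, hc⟩ | exact ⟨a, c, b, hac, hbc, ha, hc, hb⟩
    | exact ⟨b, a, c, hab, hac, hb, ha, hc⟩ | exact ⟨b, c, a, hbc, hac, hb, hc, ha⟩
    | exact ⟨c, a, b, hac, hab, hc, ha, hb⟩ | exact ⟨c, b, a, hbc, hab, hc, hb, ha⟩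

theorem ConvexOn.eqOn_of_analyticOnNhd_of_three_eq {T : Set ℝ} {g : ℝ → ℝ}
    (hg : ConvexOn ℝ T g) (hga : AnalyticOnNhd ℝ g T) {a b c : ℝ} (ha : a ∈ T) (hb : b ∈ T)
    (hc : c ∈ T) (hab : a ≠ b) (hac : a ≠ c) (hbc : b ≠ c) (hgb : g b = g a) (hgc : g c = g a) :
    EqOn g (fun _ => g a) T := by
  obtain ⟨p, m, q, hpm, hmq, ⟨hp, hgp⟩, ⟨hm, hgm⟩, ⟨hq, hgq⟩⟩ :=
    exists_lt_lt_of_three_ne (P := fun t => t ∈ T ∧ g t = g a) ⟨ha, rfl⟩ ⟨hb, hgb⟩ ⟨hc, hgc⟩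
      hab hac hbc
  have hconst : g =ᶠ[nhds m] fun _ => g a := by
    filter_upwards [Ioo_mem_nhds hpm hmq] with x hx
    rw [← hgm]
    exact hg.eqOn_Icc_of_eq hp hq hpm hmq (hgp.trans hgm.symm) (hgq.trans hgm.symm)
      (Ioo_subset_Icc_self hx)
  exact hga.eqOn_of_preconnected_of_eventuallyEq analyticOnNhd_const hg.1.isPreconnected hm hconst

theorem analyticOn_lineMap {E : Type*} [NormedAddCommGroup E] [NormedSpace ℝ E] (X Y : E)
    (s : Set ℝ) : AnalyticOn ℝ (lineMap X Y : ℝ → E) s := by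
  rw [show (lineMap X Y : ℝ → E) = fun t => t • (Y - X) + X from
    funext (lineMap_apply_module' X Y)]
  exact AnalyticOnNhd.analyticOn fun t _ => by fun_prop

theorem ConvexOn.eqOn_lineMap_preimage_of_three_eq {E : Type*} [NormedAddCommGroup E]
    [NormedSpace ℝ E] {S : Set E} {f : E → ℝ} (hf : ConvexOn ℝ S f) (hfa : AnalyticOn ℝ f S)
    {X Y : E} (hopen : IsOpen ((lineMap X Y : ℝ → E) ⁻¹' S)) (hX : X ∈ S) (hY : Y ∈ S) {t : ℝ}
    (ht : lineMap X Y t ∈ S) (ht0 : t ≠ 0) (ht1 : t ≠ 1) (hfY : f Y = f X)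
    (hft : f (lineMap X Y t) = f X) :
    EqOn (f ∘ lineMap X Y) (fun _ => f X) ((lineMap X Y : ℝ → E) ⁻¹' S) := by
  have hga : AnalyticOnNhd ℝ (f ∘ lineMap X Y) ((lineMap X Y : ℝ → E) ⁻¹' S) :=
    hopen.analyticOn_iff_analyticOnNhd.1
      (hfa.comp (analyticOn_lineMap X Y _) (mapsTo_preimage _ _))
  simpa using (hf.comp_affineMap (lineMap X Y)).eqOn_of_analyticOnNhd_of_three_eq hga
    (a := 0) (b := 1) (c := t) (by simpa using hX) (by simpa using hY) ht zero_ne_one ht0.symm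
    ht1.symm (by simpa using hfY) (by simpa using hft)

theorem isOpen_lineMap_preimage_openSimplex {ι : Type*} [Fintype ι] {X Y : ι → ℝ}
    (hX : X ∈ {v : ι → ℝ | (∀ i, 0 < v i) ∧ ∑ i, v i = 1})
    (hY : Y ∈ {v : ι → ℝ | (∀ i, 0 < v i) ∧ ∑ i, v i = 1}) :
    IsOpen ((lineMap X Y : ℝ → ι → ℝ) ⁻¹' {v : ι → ℝ | (∀ i, 0 < v i) ∧ ∑ i, v i = 1}) := by
  have hsum (t : ℝ) : ∑ i, lineMap X Y t i = 1 := by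
    simp only [lineMap_apply_module, Pi.add_apply, Pi.smul_apply, smul_eq_mul,
      Finset.sum_add_distrib, ← Finset.mul_sum, hX.2, hY.2]
    ring
  have hpre : (lineMap X Y : ℝ → ι → ℝ) ⁻¹' {v : ι → ℝ | (∀ i, 0 < v i) ∧ ∑ i, v i = 1} =
      ⋂ i, {t : ℝ | 0 < lineMap X Y t i} := by
    ext t
    simp [hsum]
  rw [hpre]
  exact isOpen_iInter_of_finite fun i =>
    isOpen_lt continuous_const ((continuous_apply i).comp lineMap_continuous)

/-- a real-analytic convex function `λ₁ < 1` on the open simplex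
`int(Δ)`, such that constancy on any whole line in `int(Δ)` would force the
value `1`, is strictly convex: there are no three distinct collinear points of
`int(Δ)` where `λ₁` takes the same value. -/
theorem strictly_convex_of_analytic_convex
    (S : Set (Fin 3 → ℝ))
    (hS : S = {v : Fin 3 → ℝ | (∀ i, 0 < v i) ∧ (∑ i, v i) = 1})
    (f : (Fin 3 → ℝ) → ℝ)
    (hconv : ConvexOn ℝ S f)
    (hanalytic : AnalyticOn ℝ f S)
    (hlt : ∀ X ∈ S, f X < 1)
    (hline : ∀ X Y, X ∈ S → Y ∈ S → X ≠ Y →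
      (∀ t : ℝ, X + t • (Y - X) ∈ S → f (X + t • (Y - X)) = f X) → f X = 1) :
    ¬ ∃ X₁ X₂ X₃, X₁ ∈ S ∧ X₂ ∈ S ∧ X₃ ∈ S ∧
      X₁ ≠ X₂ ∧ X₁ ≠ X₃ ∧ X₂ ≠ X₃ ∧
      Collinear ℝ ({X₁, X₂, X₃} : Set (Fin 3 → ℝ)) ∧
      f X₁ = f X₂ ∧ f X₁ = f X₃ := by
  rintro ⟨X₁, X₂, X₃, hX₁, hX₂, hX₃, h12, h13, h23, hcol, hf12, hf13⟩
  subst hS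
  obtain ⟨t, rfl⟩ := mem_affineSpan_pair_iff_exists_lineMap_eq.1
    (hcol.mem_affineSpan_of_mem_of_ne (p₃ := X₃) (by simp) (by simp) (by simp) h12)
  have ht0 : t ≠ 0 := by rintro rfl; simp at h13
  have ht1 : t ≠ 1 := by rintro rfl; simp at h23
  have hconst := hconv.eqOn_lineMap_preimage_of_three_eq hanalytic
    (isOpen_lineMap_preimage_openSimplex hX₁ hX₂) hX₁ hX₂ hX₃ ht0 ht1 hf12.symm hf13.symm
  have hf₁ : f X₁ = 1 := hline X₁ X₂ hX₁ hX₂ h12 fun s hs => by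
    rw [add_comm, ← lineMap_apply_module'] at hs ⊢
    exact hconst hs
  linarith [hlt X₁ hX₁]
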